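/- Let n ≥ 2, κ > 0, ε > 0, μ > 0 and α ∈ {1, …, n−1}. Define u : ℝ^n → ℝ^n by u(x) = (1/2 + G) e_α + 2κ x_α (G^2 − 1/4) e_n and the pressure p : ℝ^n → ℝ by p(x) = 4 μ κ x_α x_n / δ^2, where δ = δ(x') and G = G(x). Then at every point x ∈ ℝ^n: for each j ∈ {1, …, n−1}, μ ∂_n ∂_n u^{(j)}(x) − ∂_j p(x) = −4 μ κ x_n ∂_j( x_α / δ(x')^2 ), and for j = n, μ ∂_n ∂_n u^{(n)}(x) − ∂_n p(x) = 0. Here u^{(j)} denotes the j-th component of u. -/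

import Mathlib

noncomputable section

/-- `δ(x') = ε + 2κ|x'|²` on `ℝ^{n-1}`. -/
def del (d : ℕ) (κ ε : ℝ) (x' : EuclideanSpace ℝ (Fin d)) : ℝ :=
  ε + 2 * κ * ‖x'‖ ^ 2

/-- `G(x) = x_n / δ(x')`, for `x = (x', x_n) ∈ ℝ^{n-1} × ℝ`. -/
def Gf (d : ℕ) (κ ε : ℝ) (x : EuclideanSpace ℝ (Fin d) × ℝ) : ℝ :=
  x.2 / del d κ ε x.1

/-- Second partial derivative `∂_n ∂_n f` in the vertical variable `x_n`. -/
def dnn {d : ℕ} (f : EuclideanSpace ℝ (Fin d) × ℝ → ℝ)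
    (x : EuclideanSpace ℝ (Fin d) × ℝ) : ℝ :=
  fderiv ℝ (fun y => fderiv ℝ f y (0, 1)) x (0, 1)

/-- The auxiliary velocity field `u(x) = (1/2 + G) e_α + 2κ x_α (G² − 1/4) e_n`. -/
def uA (d : ℕ) (κ ε : ℝ) (α : Fin d) (x : EuclideanSpace ℝ (Fin d) × ℝ) :
    EuclideanSpace ℝ (Fin d) × ℝ :=
  ((1 / 2 + Gf d κ ε x) • EuclideanSpace.single α (1 : ℝ),
    2 * κ * x.1 α * (Gf d κ ε x ^ 2 - 1 / 4))

/-- The auxiliary pressure `p(x) = 4μκ x_α x_n / δ²`. -/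
def pA (d : ℕ) (κ ε μ : ℝ) (α : Fin d) (x : EuclideanSpace ℝ (Fin d) × ℝ) : ℝ :=
  4 * μ * κ * x.1 α * x.2 / del d κ ε x.1 ^ 2

/-- Auxiliary: first vertical derivative of a field `A(x') + B(x')x_n + C(x')x_n²`. -/
lemma fderiv_ABC {d : ℕ} (A B C : EuclideanSpace ℝ (Fin d) → ℝ)
    (hA : Differentiable ℝ A) (hB : Differentiable ℝ B) (hC : Differentiable ℝ C)
    (x : EuclideanSpace ℝ (Fin d) × ℝ) :
    fderiv ℝ (fun y : EuclideanSpace ℝ (Fin d) × ℝ =>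
      A y.1 + B y.1 * y.2 + C y.1 * y.2 ^ 2) x (0, 1) = B x.1 + 2 * C x.1 * x.2 := by
  have hfst : HasFDerivAt (Prod.fst : EuclideanSpace ℝ (Fin d) × ℝ → EuclideanSpace ℝ (Fin d))
      (ContinuousLinearMap.fst ℝ (EuclideanSpace ℝ (Fin d)) ℝ) x := hasFDerivAt_fst
  have hsnd : HasFDerivAt (Prod.snd : EuclideanSpace ℝ (Fin d) × ℝ → ℝ)
      (ContinuousLinearMap.snd ℝ (EuclideanSpace ℝ (Fin d)) ℝ) x := hasFDerivAt_snd
  have h1 : HasFDerivAt (fun y : EuclideanSpace ℝ (Fin d) × ℝ => A y.1)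
      ((fderiv ℝ A x.1).comp (ContinuousLinearMap.fst ℝ _ _)) x :=
    ((hA x.1).hasFDerivAt).comp x hfst
  have h2 : HasFDerivAt (fun y : EuclideanSpace ℝ (Fin d) × ℝ => B y.1)
      ((fderiv ℝ B x.1).comp (ContinuousLinearMap.fst ℝ _ _)) x :=
    ((hB x.1).hasFDerivAt).comp x hfst
  have h3 : HasFDerivAt (fun y : EuclideanSpace ℝ (Fin d) × ℝ => C y.1)
      ((fderiv ℝ C x.1).comp (ContinuousLinearMap.fst ℝ _ _)) x :=
    ((hC x.1).hasFDerivAt).comp x hfst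
  have h4 := hsnd.mul hsnd
  have h := (h1.add (h2.mul hsnd)).add (h3.mul h4)
  have e : (fun y : EuclideanSpace ℝ (Fin d) × ℝ => A y.1 + B y.1 * y.2 + C y.1 * y.2 ^ 2)
      = fun y : EuclideanSpace ℝ (Fin d) × ℝ => A y.1 + B y.1 * y.2 + C y.1 * (y.2 * y.2) := by
    funext y; ring
  rw [e, (show HasFDerivAt (fun y : EuclideanSpace ℝ (Fin d) × ℝ => A y.1 + B y.1 * y.2 + C y.1 * (y.2 * y.2)) _ x from h).fderiv]
  simp [ContinuousLinearMap.comp_apply]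
  ring

/-- Auxiliary: second vertical derivative of a field `A(x') + B(x')x_n + C(x')x_n²`. -/
lemma dnn_ABC {d : ℕ} (A B C : EuclideanSpace ℝ (Fin d) → ℝ)
    (hA : Differentiable ℝ A) (hB : Differentiable ℝ B) (hC : Differentiable ℝ C)
    (x : EuclideanSpace ℝ (Fin d) × ℝ) :
    fderiv ℝ (fun y => fderiv ℝ (fun z : EuclideanSpace ℝ (Fin d) × ℝ =>
        A z.1 + B z.1 * z.2 + C z.1 * z.2 ^ 2) y (0, 1)) x (0, 1) = 2 * C x.1 := by
  have e1 : (fun y : EuclideanSpace ℝ (Fin d) × ℝ =>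
        fderiv ℝ (fun z : EuclideanSpace ℝ (Fin d) × ℝ =>
        A z.1 + B z.1 * z.2 + C z.1 * z.2 ^ 2) y (0, 1))
      = fun y : EuclideanSpace ℝ (Fin d) × ℝ =>
        B y.1 + (fun w => 2 * C w) y.1 * y.2 + (fun _ => (0:ℝ)) y.1 * y.2 ^ 2 := by
    funext y
    rw [fderiv_ABC A B C hA hB hC y]
    ring
  rw [e1, fderiv_ABC B (fun w => 2 * C w) (fun _ => 0) hB (hC.const_mul 2)
    (differentiable_const 0) x]
  ring

theorem stokes_aux
    (d : ℕ) (κ ε μ : ℝ) (hκ : 0 < κ) (hε : 0 < ε)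
    (α : Fin d) (x : EuclideanSpace ℝ (Fin d) × ℝ) :
    (∀ j : Fin d,
        μ * dnn (fun y => (uA d κ ε α y).1 j) x
            - fderiv ℝ (pA d κ ε μ α) x (EuclideanSpace.single j 1, 0)
          = -(4 * μ * κ * x.2) *
              fderiv ℝ (fun y' : EuclideanSpace ℝ (Fin d) =>
                y' α / del d κ ε y' ^ 2) x.1 (EuclideanSpace.single j 1)) ∧
      μ * dnn (fun y => (uA d κ ε α y).2) x
          - fderiv ℝ (pA d κ ε μ α) x (0, 1) = 0 := by
  -- basic facts about δ
  have hDpos : ∀ y' : EuclideanSpace ℝ (Fin d), 0 < del d κ ε y' := by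
    intro y'; unfold del; positivity
  have hD : ∀ y' : EuclideanSpace ℝ (Fin d), del d κ ε y' ≠ 0 := fun y' => (hDpos y').ne'
  have hDdiff : Differentiable ℝ (del d κ ε) := by
    unfold del
    exact (((contDiff_norm_sq ℝ (n := 1)).differentiable one_ne_zero).const_mul (2 * κ)).const_add ε
  have hDsq : Differentiable ℝ (fun y' : EuclideanSpace ℝ (Fin d) => del d κ ε y' ^ 2) :=
    hDdiff.pow 2
  have hDsq0 : ∀ y' : EuclideanSpace ℝ (Fin d), del d κ ε y' ^ 2 ≠ 0 :=
    fun y' => pow_ne_zero 2 (hD y')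
  have hproj : Differentiable ℝ (fun y' : EuclideanSpace ℝ (Fin d) => y' α) :=
    (EuclideanSpace.proj (𝕜 := ℝ) α).differentiable
  have hq : Differentiable ℝ
      (fun y' : EuclideanSpace ℝ (Fin d) => y' α / del d κ ε y' ^ 2) :=
    by simp only [div_eq_mul_inv]; exact hproj.mul (hDsq.inv hDsq0)
  constructor
  · -- horizontal components
    intro j
    -- second vertical derivative of u^{(j)} vanishes
    have hu1 : (fun y : EuclideanSpace ℝ (Fin d) × ℝ => (uA d κ ε α y).1 j)
        = fun y : EuclideanSpace ℝ (Fin d) × ℝ =>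
          (fun _ => EuclideanSpace.single α (1:ℝ) j / 2) y.1
          + (fun y' => EuclideanSpace.single α (1:ℝ) j * (del d κ ε y')⁻¹) y.1 * y.2
          + (fun _ => (0:ℝ)) y.1 * y.2 ^ 2 := by
      funext y
      simp only [uA, Gf, PiLp.smul_apply, smul_eq_mul]
      ring
    have H1 : dnn (fun y => (uA d κ ε α y).1 j) x = 0 := by
      rw [hu1]
      exact (dnn_ABC (fun _ => EuclideanSpace.single α (1:ℝ) j / 2)
        (fun y' => EuclideanSpace.single α (1:ℝ) j * (del d κ ε y')⁻¹)
        (fun _ => (0:ℝ)) (differentiable_const _)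
        ((hDdiff.inv hD).const_mul _) (differentiable_const 0) x).trans (mul_zero 2)
    -- horizontal derivative of the pressure
    have hp3 : pA d κ ε μ α = fun y : EuclideanSpace ℝ (Fin d) × ℝ =>
        y.2 * (4 * μ * κ * (y.1 α / del d κ ε y.1 ^ 2)) := by
      funext y
      simp only [pA]
      ring
    have hr : Differentiable ℝ
        (fun y' : EuclideanSpace ℝ (Fin d) => 4 * μ * κ * (y' α / del d κ ε y' ^ 2)) :=
      hq.const_mul _
    have hfd : HasFDerivAt
        (fun y : EuclideanSpace ℝ (Fin d) × ℝ => y.2 * (4 * μ * κ * (y.1 α / del d κ ε y.1 ^ 2)))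
        (x.2 • ((fderiv ℝ (fun y' : EuclideanSpace ℝ (Fin d) =>
            4 * μ * κ * (y' α / del d κ ε y' ^ 2)) x.1).comp
            (ContinuousLinearMap.fst ℝ (EuclideanSpace ℝ (Fin d)) ℝ))
          + (4 * μ * κ * (x.1 α / del d κ ε x.1 ^ 2)) •
            (ContinuousLinearMap.snd ℝ (EuclideanSpace ℝ (Fin d)) ℝ)) x :=
      hasFDerivAt_snd.mul (((hr x.1).hasFDerivAt).comp x hasFDerivAt_fst)
    have H2 : fderiv ℝ (pA d κ ε μ α) x (EuclideanSpace.single j 1, 0)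
        = x.2 * (4 * μ * κ *
            (fderiv ℝ (fun y' : EuclideanSpace ℝ (Fin d) => y' α / del d κ ε y' ^ 2) x.1
              (EuclideanSpace.single j 1))) := by
      rw [hp3, hfd.fderiv]
      have hcm := fderiv_const_mul (hq x.1) (4 * μ * κ)
      simp [ContinuousLinearMap.comp_apply, hcm]
    rw [H1, H2]
    ring
  · -- vertical component
    have hu2 : (fun y : EuclideanSpace ℝ (Fin d) × ℝ => (uA d κ ε α y).2)
        = fun y : EuclideanSpace ℝ (Fin d) × ℝ =>
          (fun y' => -(2 * κ * y' α) / 4) y.1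
          + (fun _ => (0:ℝ)) y.1 * y.2
          + (fun y' => 2 * κ * y' α / del d κ ε y' ^ 2) y.1 * y.2 ^ 2 := by
      funext y
      simp only [uA, Gf]
      ring
    have hA2 : Differentiable ℝ
        (fun y' : EuclideanSpace ℝ (Fin d) => -(2 * κ * y' α) / 4) := by
      simp only [div_eq_mul_inv]
      exact ((hproj.const_mul (2 * κ)).neg).mul_const _
    have hC2 : Differentiable ℝ
        (fun y' : EuclideanSpace ℝ (Fin d) => 2 * κ * y' α / del d κ ε y' ^ 2) := by
      simp only [div_eq_mul_inv]
      exact (hproj.const_mul (2 * κ)).mul (hDsq.inv hDsq0)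
    have H1 : dnn (fun y => (uA d κ ε α y).2) x
        = 2 * (2 * κ * x.1 α / del d κ ε x.1 ^ 2) := by
      rw [hu2]
      exact dnn_ABC (fun y' => -(2 * κ * y' α) / 4) (fun _ => (0:ℝ))
        (fun y' => 2 * κ * y' α / del d κ ε y' ^ 2)
        hA2 (differentiable_const 0) hC2 x
    have hB3 : Differentiable ℝ
        (fun y' : EuclideanSpace ℝ (Fin d) => 4 * μ * κ * y' α / del d κ ε y' ^ 2) := by
      simp only [div_eq_mul_inv]
      exact (hproj.const_mul (4 * μ * κ)).mul (hDsq.inv hDsq0)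
    have hp2 : pA d κ ε μ α = fun y : EuclideanSpace ℝ (Fin d) × ℝ =>
        (fun _ => (0:ℝ)) y.1
        + (fun y' => 4 * μ * κ * y' α / del d κ ε y' ^ 2) y.1 * y.2
        + (fun _ => (0:ℝ)) y.1 * y.2 ^ 2 := by
      funext y
      simp only [pA]
      ring
    have H2 : fderiv ℝ (pA d κ ε μ α) x ((0 : EuclideanSpace ℝ (Fin d)), (1:ℝ))
        = 4 * μ * κ * x.1 α / del d κ ε x.1 ^ 2 := by
      rw [hp2, fderiv_ABC (fun _ => (0:ℝ))
        (fun y' => 4 * μ * κ * y' α / del d κ ε y' ^ 2) (fun _ => (0:ℝ))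
        (differentiable_const 0) hB3 (differentiable_const 0) x]
      ring
    rw [H1, H2]
    ring

/-- For `α ∈ {1,…,n−1}`:  `μ ∂_n∂_n u^{(j)} − ∂_j p = −4μκ x_n ∂_j (x_α/δ²)` for each
horizontal index `j`, and `μ ∂_n∂_n u^{(n)} − ∂_n p = 0`. -/
theorem stokes_residual_translational_field
    (n : ℕ) (hn : 2 ≤ n) (κ ε μ : ℝ) (hκ : 0 < κ) (hε : 0 < ε) (hμ : 0 < μ)
    (α : Fin (n - 1)) (x : EuclideanSpace ℝ (Fin (n - 1)) × ℝ) :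
    (∀ j : Fin (n - 1),
        μ * dnn (fun y => (uA (n - 1) κ ε α y).1 j) x
            - fderiv ℝ (pA (n - 1) κ ε μ α) x (EuclideanSpace.single j 1, 0)
          = -(4 * μ * κ * x.2) *
              fderiv ℝ (fun y' : EuclideanSpace ℝ (Fin (n - 1)) =>
                y' α / del (n - 1) κ ε y' ^ 2) x.1 (EuclideanSpace.single j 1)) ∧
      μ * dnn (fun y => (uA (n - 1) κ ε α y).2) x
          - fderiv ℝ (pA (n - 1) κ ε μ α) x (0, 1) = 0 :=
  stokes_aux (n - 1) κ ε μ hκ hε α x
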